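/- Assume u_a < 0 and u_b > 0. For every t > 0 and every x with x < a + u_a t, the approximate velocity u^ε(x,t) tends to u_a and the approximate potential density R^ε(x,t) tends to ρ_c·(x − c − u_a t) as ε → 0⁺. -/

import Mathlib

/-!
Put `E(ε) = exp (((x - a - u_a t)² - (x - a)²) / (2tε))`. As `x - a - u_a t < 0`, the factor
`erfc ((x - a - u_a t) / √(2tε))` tends to `√π`. Every other term of `D` and of the numerators of
`u^ε` and `R^ε` is, by the Gaussian tail bound `erfc z ≤ √π e^{-z²}` for `z ≥ 0`, at most
`C exp (k / (2tε))` for some `k < (x - a - u_a t)² - (x - a)²` (this is where `x < a < b, c, d`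
enters), hence `o(E)`. So after division by `E` the denominator tends to `√π` and the numerators
to `u_a √π` and `ρ_c (x - c - u_a t) √π`.
-/

open Real Filter Topology

/-- The unnormalized complementary error function `erfc z = ∫_z^∞ e^{-s²} ds`. -/
noncomputable def erfc (z : ℝ) : ℝ := ∫ s in Set.Ioi z, Real.exp (-s ^ 2)

/-- The denominator `D(x,t,ε)` appearing in the Hopf–Cole formulas. -/
noncomputable def D (a b u_a u_b x t ε : ℝ) : ℝ :=
  erfc ((x - a - u_a * t) / Real.sqrt (2 * t * ε))
      * Real.exp (((x - a - u_a * t) ^ 2 - (x - a) ^ 2) / (2 * t * ε))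
    + erfc ((x - b) / Real.sqrt (2 * t * ε))
    - erfc ((x - a) / Real.sqrt (2 * t * ε))
    + erfc (-(x - b) / Real.sqrt (2 * t * ε)) * Real.exp (-u_b / ε)

/-- The approximate velocity `u^ε(x,t)`. -/
noncomputable def uEps (a b u_a u_b x t ε : ℝ) : ℝ :=
  (u_a * erfc ((x - a - u_a * t) / Real.sqrt (2 * t * ε))
        * Real.exp (((x - a - u_a * t) ^ 2 - (x - a) ^ 2) / (2 * t * ε))
      + ε / Real.sqrt (2 * t * ε) * Real.exp (-(x - b) ^ 2 / (2 * t * ε))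
          * (1 - Real.exp (-u_b / ε)))
    / D a b u_a u_b x t ε

/-- The approximate potential density `R^ε(x,t)`. -/
noncomputable def REps (a b c d u_a u_b ρ_c ρ_d x t ε : ℝ) : ℝ :=
  (t * ε / Real.sqrt (2 * t * ε) * ρ_c * Real.exp (-(x - a) ^ 2 / (2 * t * ε))
      + ρ_c * (x - c - u_a * t)
          * Real.exp (((x - a - u_a * t) ^ 2 - (x - a) ^ 2) / (2 * t * ε))
          * erfc ((x - a - u_a * t) / Real.sqrt (2 * t * ε))
      + t * ε / Real.sqrt (2 * t * ε) * ρ_c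
          * (Real.exp (-(x - a) ^ 2 / (2 * t * ε)) - Real.exp (-(x - c) ^ 2 / (2 * t * ε)))
      + ρ_c * (x - c)
          * (erfc ((x - c) / Real.sqrt (2 * t * ε)) - erfc ((x - a) / Real.sqrt (2 * t * ε)))
      + ρ_d * Real.exp (-u_b / ε) * erfc (-(x - d) / Real.sqrt (2 * t * ε)))
    / D a b u_a u_b x t ε

open MeasureTheory Set

lemma integrable_exp_neg_sq : Integrable fun s : ℝ => exp (-s ^ 2) := by
  simpa using integrable_exp_neg_mul_sq one_pos

lemma integral_exp_neg_sq : ∫ s : ℝ, exp (-s ^ 2) = √π := by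
  simpa using integral_gaussian 1

lemma erfc_nonneg (z : ℝ) : 0 ≤ erfc z :=
  setIntegral_nonneg measurableSet_Ioi fun _ _ => (exp_pos _).le

lemma erfc_antitone : Antitone erfc := fun _ _ hpq =>
  setIntegral_mono_set integrable_exp_neg_sq.integrableOn
    (.of_forall fun _ => (exp_pos _).le) (Ioi_subset_Ioi hpq).eventuallyLE

lemma erfc_add_erfc_neg (z : ℝ) : erfc z + erfc (-z) = √π := by
  have h : erfc (-z) = ∫ s in Iic z, exp (-s ^ 2) := by
    simp only [erfc, ← integral_comp_neg_Iic, neg_sq]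
  rw [h, add_comm, erfc, intervalIntegral.integral_Iic_add_Ioi
    integrable_exp_neg_sq.integrableOn integrable_exp_neg_sq.integrableOn, integral_exp_neg_sq]

lemma erfc_le_sqrt_pi (z : ℝ) : erfc z ≤ √π := by
  linarith [erfc_add_erfc_neg z, erfc_nonneg (-z)]

lemma erfc_le_sqrt_pi_mul_exp_neg_sq {z : ℝ} (hz : 0 ≤ z) : erfc z ≤ √π * exp (-z ^ 2) := by
  have hshift : Integrable fun s => exp (-(s - z) ^ 2) := integrable_exp_neg_sq.comp_sub_right z
  calc erfc z ≤ ∫ s in Ioi z, exp (-z ^ 2) * exp (-(s - z) ^ 2) := by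
        refine setIntegral_mono_on integrable_exp_neg_sq.integrableOn
          (hshift.const_mul _).integrableOn measurableSet_Ioi fun s hs => ?_
        -- `s² - z² - (s - z)² = 2 z (s - z) ≥ 0`
        rw [← exp_add]
        exact exp_le_exp.2 (by nlinarith [mem_Ioi.1 hs])
    _ = exp (-z ^ 2) * ∫ s in Ioi z, exp (-(s - z) ^ 2) := integral_const_mul _ _
    _ ≤ exp (-z ^ 2) * ∫ s, exp (-(s - z) ^ 2) :=
        mul_le_mul_of_nonneg_left
          (setIntegral_le_integral hshift (.of_forall fun _ => (exp_pos _).le)) (exp_pos _).le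
    _ = √π * exp (-z ^ 2) := by
        rw [integral_sub_right_eq_self (fun s => exp (-s ^ 2)), integral_exp_neg_sq, mul_comm]

lemma abs_erfc_sub_erfc_le {p q : ℝ} (hpq : p ≤ q) (hq : q ≤ 0) :
    |erfc p - erfc q| ≤ √π * exp (-q ^ 2) := by
  have htail : erfc (-q) ≤ √π * exp (-q ^ 2) := by
    simpa using erfc_le_sqrt_pi_mul_exp_neg_sq (neg_nonneg.2 hq)
  rw [abs_of_nonneg (sub_nonneg.2 (erfc_antitone hpq))]
  linarith [erfc_add_erfc_neg q, erfc_le_sqrt_pi p]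

lemma sq_div_sqrt (r : ℝ) {σ : ℝ} (hσ : 0 ≤ σ) : (r / √σ) ^ 2 = r ^ 2 / σ := by
  rw [div_pow, sq_sqrt hσ]

section Asymptotics

variable {α : Type*} {l : Filter α} {σ : α → ℝ}

lemma tendsto_exp_div_of_neg (hσ : Tendsto σ l (𝓝[>] 0)) {k : ℝ} (hk : k < 0) :
    Tendsto (fun y => exp (k / σ y)) l (𝓝 0) := by
  have h := tendsto_exp_atBot.comp ((tendsto_inv_nhdsGT_zero.comp hσ).const_mul_atTop_of_neg hk)
  simpa only [Function.comp_def, div_eq_mul_inv] using h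

lemma tendsto_div_exp_of_abs_le (hσ : Tendsto σ l (𝓝[>] 0)) {f : α → ℝ} {C k δ : ℝ}
    (hkδ : k < δ) (hf : ∀ᶠ y in l, |f y| ≤ C * exp (k / σ y)) :
    Tendsto (fun y => f y / exp (δ / σ y)) l (𝓝 0) := by
  have hbound := (tendsto_exp_div_of_neg hσ (sub_neg.2 hkδ)).const_mul C
  rw [mul_zero] at hbound
  refine squeeze_zero_norm' ?_ hbound
  filter_upwards [hf] with y hy
  rw [norm_div, norm_of_nonneg (exp_pos _).le, sub_div, exp_sub, ← mul_div_assoc]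
  exact div_le_div_of_nonneg_right hy (exp_pos _).le

lemma tendsto_exp_div_exp_of_lt (hσ : Tendsto σ l (𝓝[>] 0)) {k δ : ℝ} (hkδ : k < δ) :
    Tendsto (fun y => exp (k / σ y) / exp (δ / σ y)) l (𝓝 0) :=
  tendsto_div_exp_of_abs_le hσ (C := 1) hkδ
    (.of_forall fun _ => by rw [one_mul, abs_of_pos (exp_pos _)])

lemma tendsto_erfc_div_sqrt_of_neg (hσ : Tendsto σ l (𝓝[>] 0)) {q : ℝ} (hq : q < 0) :
    Tendsto (fun y => erfc (q / √(σ y))) l (𝓝 √π) := by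
  have hbound :=
    (tendsto_exp_div_of_neg hσ (neg_neg_of_pos (pow_pos (neg_pos.2 hq) 2))).const_mul √π
  rw [mul_zero] at hbound
  refine tendsto_iff_norm_sub_tendsto_zero.2 (squeeze_zero_norm' ?_ hbound)
  filter_upwards [tendsto_nhdsWithin_iff.1 hσ |>.2] with y (hy : 0 < σ y)
  have htail := erfc_le_sqrt_pi_mul_exp_neg_sq (div_nonneg (neg_nonneg.2 hq.le) (sqrt_nonneg (σ y)))
  rw [sq_div_sqrt _ hy.le, ← neg_div] at htail
  have hsum := erfc_add_erfc_neg (q / √(σ y))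
  rw [← neg_div] at hsum
  rw [norm_norm, Real.norm_eq_abs, abs_le]
  constructor <;> linarith [erfc_nonneg (-q / √(σ y))]

lemma tendsto_div_of_tendsto_div_div {f g e : α → ℝ} {L M : ℝ}
    (hf : Tendsto (fun y => f y / e y) l (𝓝 (L * M))) (hg : Tendsto (fun y => g y / e y) l (𝓝 M))
    (hM : M ≠ 0) (he : ∀ y, e y ≠ 0) : Tendsto (fun y => f y / g y) l (𝓝 L) := by
  rw [← mul_div_cancel_right₀ L hM]
  exact (hf.div hg hM).congr fun y => div_div_div_cancel_right₀ (he y) _ _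

end Asymptotics

lemma tendsto_const_mul_nhdsGT_zero {c : ℝ} (hc : 0 < c) :
    Tendsto (fun ε : ℝ => c * ε) (𝓝[>] 0) (𝓝[>] 0) :=
  tendsto_iff_comap.2 (comap_mulLeft_nhdsGT_zero hc).ge

lemma tendsto_div_sqrt_const_mul {c : ℝ} (hc : 0 < c) :
    Tendsto (fun ε : ℝ => ε / √(c * ε)) (𝓝[>] 0) (𝓝 0) := by
  have h : Tendsto (fun ε : ℝ => √(c * ε) / c) (𝓝[>] 0) (𝓝 0) := by
    have := ((continuous_sqrt.comp (continuous_const_mul c)).tendsto 0).div_const c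
    simpa using this.mono_left nhdsWithin_le_nhds
  refine h.congr' ?_
  filter_upwards [self_mem_nhdsWithin] with ε (hε : 0 < ε)
  have hs : 0 < √(c * ε) := sqrt_pos.2 (by positivity)
  rw [div_eq_div_iff hc.ne' hs.ne', mul_self_sqrt (by positivity)]
  ring

lemma abs_erfc_div_sqrt_sub_le {p q σ : ℝ} (hpq : p ≤ q) (hq : q ≤ 0) (hσ : 0 ≤ σ) :
    |erfc (p / √σ) - erfc (q / √σ)| ≤ √π * exp (-q ^ 2 / σ) := by
  have h := abs_erfc_sub_erfc_le (div_le_div_of_nonneg_right hpq (sqrt_nonneg σ))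
    (div_nonpos_of_nonpos_of_nonneg hq (sqrt_nonneg σ))
  rwa [sq_div_sqrt _ hσ, ← neg_div] at h

lemma abs_erfc_div_sqrt_mul_le {r σ w : ℝ} (hr : 0 ≤ r) (hσ : 0 ≤ σ) (hw₀ : 0 ≤ w)
    (hw₁ : w ≤ 1) : |erfc (r / √σ) * w| ≤ √π * exp (-r ^ 2 / σ) := by
  have h := erfc_le_sqrt_pi_mul_exp_neg_sq (div_nonneg hr (sqrt_nonneg σ))
  rw [sq_div_sqrt _ hσ, ← neg_div] at h
  rw [abs_of_nonneg (mul_nonneg (erfc_nonneg _) hw₀)]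
  exact (mul_le_of_le_one_right (erfc_nonneg _) hw₁).trans h

lemma exp_neg_div_le_one {u ε : ℝ} (hu : 0 < u) (hε : 0 < ε) : exp (-u / ε) ≤ 1 :=
  exp_le_one_iff.2 (div_nonpos_of_nonpos_of_nonneg (neg_nonpos.2 hu.le) hε.le)

section HopfCole

variable {a b c d u_a u_b ρ_c ρ_d x t : ℝ}

lemma tendsto_D_div_exp (hab : a < b) (hub : 0 < u_b) (ht : 0 < t) (hxa : x < a)
    (hx : x < a + u_a * t) :
    Tendsto (fun ε => D a b u_a u_b x t ε
      / exp (((x - a - u_a * t) ^ 2 - (x - a) ^ 2) / (2 * t * ε))) (𝓝[>] 0) (𝓝 √π) := by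
  have hσ := tendsto_const_mul_nhdsGT_zero (by positivity : 0 < 2 * t)
  have h₁ := tendsto_erfc_div_sqrt_of_neg hσ (q := x - a - u_a * t) (by linarith)
  have h₂ : Tendsto (fun ε => (erfc ((x - b) / √(2 * t * ε)) - erfc ((x - a) / √(2 * t * ε)))
      / exp (((x - a - u_a * t) ^ 2 - (x - a) ^ 2) / (2 * t * ε))) (𝓝[>] 0) (𝓝 0) := by
    refine tendsto_div_exp_of_abs_le hσ (C := √π) (k := -(x - a) ^ 2) (by nlinarith) ?_
    filter_upwards [self_mem_nhdsWithin] with ε (hε : 0 < ε)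
    exact abs_erfc_div_sqrt_sub_le (by linarith) (by linarith) (by positivity)
  have h₃ : Tendsto (fun ε => erfc (-(x - b) / √(2 * t * ε)) * exp (-u_b / ε)
      / exp (((x - a - u_a * t) ^ 2 - (x - a) ^ 2) / (2 * t * ε))) (𝓝[>] 0) (𝓝 0) := by
    refine tendsto_div_exp_of_abs_le hσ (C := √π) (k := -(-(x - b)) ^ 2) (by nlinarith) ?_
    filter_upwards [self_mem_nhdsWithin] with ε (hε : 0 < ε)
    exact abs_erfc_div_sqrt_mul_le (by linarith) (by positivity) (exp_pos _).le
      (exp_neg_div_le_one hub hε)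
  have h := h₁.add (h₂.add h₃)
  rw [add_zero, add_zero] at h
  refine h.congr fun ε => ?_
  simp only [D]
  field_simp
  ring

lemma tendsto_uEps (hab : a < b) (hub : 0 < u_b) (ht : 0 < t) (hxa : x < a)
    (hx : x < a + u_a * t) :
    Tendsto (fun ε => uEps a b u_a u_b x t ε) (𝓝[>] 0) (𝓝 u_a) := by
  refine tendsto_div_of_tendsto_div_div ?_ (tendsto_D_div_exp hab hub ht hxa hx)
    (sqrt_pos.2 pi_pos).ne' fun ε => exp_ne_zero _
  have hσ := tendsto_const_mul_nhdsGT_zero (by positivity : 0 < 2 * t)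
  have h₁ := (tendsto_erfc_div_sqrt_of_neg hσ (q := x - a - u_a * t) (by linarith)).const_mul u_a
  have h₂ : Tendsto (fun ε => exp (-(x - b) ^ 2 / (2 * t * ε)) * (1 - exp (-u_b / ε))
      / exp (((x - a - u_a * t) ^ 2 - (x - a) ^ 2) / (2 * t * ε))) (𝓝[>] 0) (𝓝 0) := by
    refine tendsto_div_exp_of_abs_le hσ (C := 1) (k := -(x - b) ^ 2) (by nlinarith) ?_
    filter_upwards [self_mem_nhdsWithin] with ε (hε : 0 < ε)
    have hw := exp_neg_div_le_one hub hε
    rw [one_mul, abs_mul, abs_of_pos (exp_pos _), abs_of_nonneg (by linarith)]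
    exact mul_le_of_le_one_right (exp_pos _).le (by linarith [exp_pos (-u_b / ε)])
  have h := h₁.add ((tendsto_div_sqrt_const_mul (by positivity : 0 < 2 * t)).mul h₂)
  rw [mul_zero, add_zero] at h
  refine h.congr fun ε => ?_
  field_simp

lemma tendsto_REps (hac : a < c) (had : a < d) (hab : a < b) (hub : 0 < u_b) (ht : 0 < t)
    (hxa : x < a) (hx : x < a + u_a * t) :
    Tendsto (fun ε => REps a b c d u_a u_b ρ_c ρ_d x t ε) (𝓝[>] 0)
      (𝓝 (ρ_c * (x - c - u_a * t))) := by
  refine tendsto_div_of_tendsto_div_div ?_ (tendsto_D_div_exp hab hub ht hxa hx)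
    (sqrt_pos.2 pi_pos).ne' fun ε => exp_ne_zero _
  have hσ := tendsto_const_mul_nhdsGT_zero (by positivity : 0 < 2 * t)
  have hexp_a := tendsto_exp_div_exp_of_lt hσ (k := -(x - a) ^ 2)
    (δ := (x - a - u_a * t) ^ 2 - (x - a) ^ 2) (by nlinarith)
  have hexp_c := tendsto_exp_div_exp_of_lt hσ (k := -(x - c) ^ 2)
    (δ := (x - a - u_a * t) ^ 2 - (x - a) ^ 2) (by nlinarith)
  have herfc := tendsto_erfc_div_sqrt_of_neg hσ (q := x - a - u_a * t) (by linarith)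
  have hdiff : Tendsto (fun ε => (erfc ((x - c) / √(2 * t * ε)) - erfc ((x - a) / √(2 * t * ε)))
      / exp (((x - a - u_a * t) ^ 2 - (x - a) ^ 2) / (2 * t * ε))) (𝓝[>] 0) (𝓝 0) := by
    refine tendsto_div_exp_of_abs_le hσ (C := √π) (k := -(x - a) ^ 2) (by nlinarith) ?_
    filter_upwards [self_mem_nhdsWithin] with ε (hε : 0 < ε)
    exact abs_erfc_div_sqrt_sub_le (by linarith) (by linarith) (by positivity)
  have htail : Tendsto (fun ε => erfc (-(x - d) / √(2 * t * ε)) * exp (-u_b / ε)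
      / exp (((x - a - u_a * t) ^ 2 - (x - a) ^ 2) / (2 * t * ε))) (𝓝[>] 0) (𝓝 0) := by
    refine tendsto_div_exp_of_abs_le hσ (C := √π) (k := -(-(x - d)) ^ 2) (by nlinarith) ?_
    filter_upwards [self_mem_nhdsWithin] with ε (hε : 0 < ε)
    exact abs_erfc_div_sqrt_mul_le (by linarith) (by positivity) (exp_pos _).le
      (exp_neg_div_le_one hub hε)
  have h := ((((tendsto_div_sqrt_const_mul (by positivity : 0 < 2 * t)).mul
    ((hexp_a.const_mul 2).sub hexp_c)).const_mul (t * ρ_c)).add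
    (herfc.const_mul (ρ_c * (x - c - u_a * t)))).add (hdiff.const_mul (ρ_c * (x - c)))
    |>.add (htail.const_mul ρ_d)
  simp only [mul_zero, sub_zero, zero_add, add_zero] at h
  refine h.congr fun ε => ?_
  field_simp
  ring

end HopfCole

/-- Case `u_a < 0`, `u_b > 0`, region `x < a + u_a·t`: as `ε → 0⁺`, the approximate velocity
tends to `u_a` and the approximate potential density tends to `ρ_c·(x − c − u_a·t)`. -/
theorem vanishing_viscosity_limit_left_of_rarefaction
    (a b c d u_a u_b ρ_c ρ_d : ℝ) (hac : a < c) (hcb : c < b) (hbd : b < d)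
    (hua : u_a < 0) (hub : 0 < u_b) (t x : ℝ) (ht : 0 < t) (hx : x < a + u_a * t) :
    Tendsto (fun ε : ℝ => uEps a b u_a u_b x t ε) (𝓝[>] 0) (𝓝 u_a)
    ∧ Tendsto (fun ε : ℝ => REps a b c d u_a u_b ρ_c ρ_d x t ε) (𝓝[>] 0)
        (𝓝 (ρ_c * (x - c - u_a * t))) := by
  have hab : a < b := hac.trans hcb
  have hxa : x < a := by nlinarith
  exact ⟨tendsto_uEps hab hub ht hxa hx,
    tendsto_REps hac (hab.trans hbd) hab hub ht hxa hx⟩
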